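/- arXiv:2503.21855 — 4 statements merged into one kernel-verified Lean document; each statement's English description precedes it below -/
import Mathlib

section
/- Let X be a type, let W be the set of finite words (lists) over X with empty word 1, and let V be the free ℝ-vector space spanned by W, equipped with the shuffle product. Given any map ã : X → ℝ, define a : W → ℝ by a(1) = 1 and a(x₁x₂⋯xₙ) = (1/n!)·ã(x₁)·ã(x₂)⋯ã(xₙ). Then the linear extension of a to V is a character of the shuffle algebra: for all words π, η one has a(π ⧢ η) = a(π)·a(η). -/
/-- The multiset of interleavings (shuffles) of two words. -/
def shuffles {X : Type*} : List X → List X → Multiset (List X)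
  | [], l => {l}
  | l, [] => {l}
  | a :: u, b :: v =>
      ((shuffles u (b :: v)).map (a :: ·)) + ((shuffles (a :: u) v).map (b :: ·))
termination_by l₁ l₂ => l₁.length + l₂.length

/-- The shuffle product of two words, as an element of the free ℝ-vector space
spanned by the words over `X`. -/
noncomputable def shuffleProd {X : Type*} (l₁ l₂ : List X) : List X →₀ ℝ :=
  ((shuffles l₁ l₂).map fun w => Finsupp.single w (1 : ℝ)).sum

/-- Every shuffle of `u` and `v` is a permutation of `u ++ v`. -/
lemma shuffles_perm {X : Type*} : ∀ (u v : List X), ∀ w ∈ shuffles u v, w.Perm (u ++ v) := by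
  intro u v
  induction u, v using shuffles.induct with
  | case1 l => simp [shuffles]
  | case2 l h =>
      cases l with
      | nil => simp [shuffles]
      | cons a u => simp [shuffles]
  | case3 a u b v ih1 ih2 =>
      intro w hw
      rw [shuffles] at hw
      simp only [Multiset.mem_add, Multiset.mem_map] at hw
      rcases hw with ⟨w', hw', rfl⟩ | ⟨w', hw', rfl⟩
      · exact List.Perm.cons a (ih1 w' hw')
      · exact ((ih2 w' hw').cons b).trans (List.perm_middle.symm.trans (by simp))

/-- There are `(n + m).choose n` shuffles of words of lengths `n` and `m`. -/
lemma shuffles_card {X : Type*} : ∀ (u v : List X),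
    Multiset.card (shuffles u v) = (u.length + v.length).choose u.length := by
  intro u v
  induction u, v using shuffles.induct with
  | case1 l => simp [shuffles]
  | case2 l h =>
      cases l with
      | nil => simp [shuffles]
      | cons a u => simp [shuffles]
  | case3 a u b v ih1 ih2 =>
      rw [shuffles]
      simp only [Multiset.card_add, Multiset.card_map, ih1, ih2, List.length_cons]
      have e1 : u.length + (v.length + 1) = u.length + v.length + 1 := by omega
      have e2 : u.length + 1 + v.length = u.length + v.length + 1 := by omega
      have e3 : u.length + 1 + (v.length + 1) = (u.length + v.length + 1) + 1 := by omega
      rw [e1, e2, e3]; exact (Nat.choose_succ_succ _ _).symm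

theorem stmt0 {X : Type*} (atilde : X → ℝ) (a : List X → ℝ)
    (ha : ∀ l : List X, a l = (1 / (Nat.factorial l.length : ℝ)) * (l.map atilde).prod)
    (π η : List X) :
    Finsupp.linearCombination ℝ a (shuffleProd π η) = a π * a η := by
  set n := π.length
  set m := η.length
  have key : ∀ w ∈ shuffles π η, a w =
      (1 / ((n + m).factorial : ℝ)) * ((π.map atilde).prod * (η.map atilde).prod) := by
    intro w hw
    have hp := shuffles_perm π η w hw
    rw [ha w, hp.length_eq, List.length_append]
    congr 1
    rw [← List.prod_append, ← List.map_append]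
    exact List.Perm.prod_eq (hp.map atilde)
  rw [shuffleProd, map_multiset_sum, Multiset.map_map]
  rw [Multiset.map_congr rfl (fun w hw => by
        simp only [Function.comp_apply, Finsupp.linearCombination_single, one_smul]
        exact key w hw)]
  rw [Multiset.map_const', Multiset.sum_replicate, shuffles_card, ha, ha]
  have hc : (((n + m).choose n : ℕ) * n.factorial * m.factorial : ℝ)
      = ((n + m).factorial : ℝ) := by
    have h := Nat.add_choose_mul_factorial_mul_factorial m n
    rw [Nat.add_comm m n, mul_right_comm] at h
    exact_mod_cast h
  have h1 : (n.factorial : ℝ) ≠ 0 := Nat.cast_ne_zero.mpr n.factorial_ne_zero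
  have h2 : (m.factorial : ℝ) ≠ 0 := Nat.cast_ne_zero.mpr m.factorial_ne_zero
  have h3 : ((n + m).factorial : ℝ) ≠ 0 := Nat.cast_ne_zero.mpr (n + m).factorial_ne_zero
  rw [nsmul_eq_mul]
  field_simp
  linear_combination ((π.map atilde).prod * (η.map atilde).prod) * hc
end

section
/- Let F : ℝᴺ → ℝᴺ be any map and E_1, …, E_D : ℝᴺ → ℝᴺ be continuously differentiable maps with ‖E_d(x)‖ ≤ M for all x ∈ ℝᴺ and all d. For a twice continuously differentiable u : ℝᴺ → ℝ define Lu(x) = Du(x)[F(x)] + Σ_{d=1}^{D} D(y ↦ Du(y)[E_d(y)])(x)[E_d(x)]. Assume there exist ν ≥ 1 and λ ∈ ℝ such that L(‖·‖²)(x) ≤ ν + λ‖x‖² for all x ∈ ℝᴺ. Then for every natural number q ≥ 1 there exists a constant C > 0 such that L(‖·‖^{2q})(x) ≤ C(1 + ‖x‖^{2q}) for all x ∈ ℝᴺ. -/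
open scoped BigOperators

/-- The second-order differential operator in Hörmander form
`Lu(x) = Du(x)[F(x)] + ∑_d D(y ↦ Du(y)[E_d(y)])(x)[E_d(x)]`. -/
noncomputable def Lop {N D : ℕ}
    (F : EuclideanSpace ℝ (Fin N) → EuclideanSpace ℝ (Fin N))
    (E : Fin D → EuclideanSpace ℝ (Fin N) → EuclideanSpace ℝ (Fin N))
    (u : EuclideanSpace ℝ (Fin N) → ℝ) (x : EuclideanSpace ℝ (Fin N)) : ℝ :=
  fderiv ℝ u x (F x) + ∑ d : Fin D, fderiv ℝ (fun y => fderiv ℝ u y (E d y)) x (E d x)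

/-! With `u = ‖·‖²` and `η t = t ^ q`, the diffusion chain rule
`L(η ∘ u) = η'(u) Lu + η''(u) Γ(u)`, where `Γ(u) = ∑_d (Du[E_d])² = 4 ∑_d ⟪x, E_d x⟫²`, gives
`L(‖x‖^{2q}) = q ‖x‖^{2q-2} L(‖x‖²) + 4q(q-1) ‖x‖^{2q-4} ∑_d ⟪x, E_d x⟫²`.
The first term is at most `q ‖x‖^{2q-2} (ν + λ‖x‖²)` and Cauchy–Schwarz bounds the second by
`4q(q-1) D M² ‖x‖^{2q-2}`; finally `‖x‖^{2q-2} ≤ 1 + ‖x‖^{2q}`. -/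

open scoped RealInnerProductSpace

section InnerProductSpace

variable {V : Type*} [NormedAddCommGroup V] [InnerProductSpace ℝ V]

theorem fderiv_norm_sq_apply_apply (x v : V) :
    fderiv ℝ (fun y : V => ‖y‖ ^ 2) x v = 2 * ⟪x, v⟫ := by
  simp [fderiv_norm_sq_apply]

theorem DifferentiableAt.fderiv_norm_sq_apply {X : V → V} {x : V}
    (hX : DifferentiableAt ℝ X x) :
    DifferentiableAt ℝ (fun y => fderiv ℝ (fun z : V => ‖z‖ ^ 2) y (X y)) x := by
  simp only [fderiv_norm_sq_apply_apply]
  exact (differentiableAt_id.inner ℝ hX).const_mul 2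

theorem sq_inner_le_sq_mul_norm_sq {x v : V} {M : ℝ} (hv : ‖v‖ ≤ M) :
    ⟪x, v⟫ ^ 2 ≤ M ^ 2 * ‖x‖ ^ 2 := by
  calc ⟪x, v⟫ ^ 2 = |⟪x, v⟫| ^ 2 := (sq_abs _).symm
    _ ≤ (‖x‖ * ‖v‖) ^ 2 := by gcongr; exact abs_real_inner_le_norm x v
    _ ≤ M ^ 2 * ‖x‖ ^ 2 := by
      rw [mul_pow, mul_comm]
      gcongr

theorem sum_sq_inner_le {ι : Type*} [Fintype ι] {v : ι → V} {M : ℝ} (hv : ∀ i, ‖v i‖ ≤ M)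
    (x : V) :
    ∑ i, ⟪x, v i⟫ ^ 2 ≤ Fintype.card ι * M ^ 2 * ‖x‖ ^ 2 := by
  calc ∑ i, ⟪x, v i⟫ ^ 2 ≤ ∑ _i : ι, M ^ 2 * ‖x‖ ^ 2 :=
        Finset.sum_le_sum fun i _ => sq_inner_le_sq_mul_norm_sq (hv i)
    _ = Fintype.card ι * M ^ 2 * ‖x‖ ^ 2 := by simp [mul_assoc]

end InnerProductSpace

theorem natCast_mul_pow_sub_one_mul_self (n : ℕ) (t : ℝ) :
    (n : ℝ) * t ^ (n - 1) * t = n * t ^ n := by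
  cases n with
  | zero => simp
  | succ n => simp [pow_succ, mul_assoc]

theorem pow_le_one_add_pow_succ {t : ℝ} (ht : 0 ≤ t) (n : ℕ) : t ^ n ≤ 1 + t ^ (n + 1) := by
  rcases le_total t 1 with h | h
  · linarith [pow_le_one₀ ht h (n := n), pow_nonneg ht (n + 1)]
  · have : t ^ n ≤ t ^ (n + 1) := pow_le_pow_right₀ h n.le_succ
    linarith

section Lop

variable {N D : ℕ} (F : EuclideanSpace ℝ (Fin N) → EuclideanSpace ℝ (Fin N))
  (E : Fin D → EuclideanSpace ℝ (Fin N) → EuclideanSpace ℝ (Fin N))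

theorem Lop_comp {u : EuclideanSpace ℝ (Fin N) → ℝ} {η η' : ℝ → ℝ} {η'' : ℝ}
    {x : EuclideanSpace ℝ (Fin N)} (hη : ∀ t, HasDerivAt η (η' t) t)
    (hη' : HasDerivAt η' η'' (u x)) (hu : Differentiable ℝ u)
    (hEu : ∀ d, DifferentiableAt ℝ (fun y => fderiv ℝ u y (E d y)) x) :
    Lop F E (η ∘ u) x = η' (u x) * Lop F E u x + η'' * ∑ d, (fderiv ℝ u x (E d x)) ^ 2 := by
  have hD : ∀ y v, fderiv ℝ (η ∘ u) y v = η' (u y) * fderiv ℝ u y v := fun y v => by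
    rw [((hη (u y)).comp_hasFDerivAt y (hu y).hasFDerivAt).fderiv]
    rfl
  have hDE : ∀ d, fderiv ℝ (fun y => fderiv ℝ (η ∘ u) y (E d y)) x (E d x) =
      η' (u x) * fderiv ℝ (fun y => fderiv ℝ u y (E d y)) x (E d x)
        + η'' * fderiv ℝ u x (E d x) ^ 2 := fun d => by
    simp only [hD]
    have hprod := (hη'.comp_hasFDerivAt x (hu x).hasFDerivAt).mul (hEu d).hasFDerivAt
    rw [show (fun y => η' (u y) * fderiv ℝ u y (E d y)) = (η' ∘ u) * fun y => fderiv ℝ u y (E d y)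
      from rfl, hprod.fderiv]
    simp only [add_apply, smul_apply, smul_eq_mul, Function.comp_apply]
    ring
  rw [Lop, Lop, Finset.sum_congr rfl fun d _ => hDE d, hD, Finset.sum_add_distrib,
    ← Finset.mul_sum, ← Finset.mul_sum]
  ring

theorem Lop_norm_sq_pow_succ (hE : ∀ d, Differentiable ℝ (E d)) (n : ℕ)
    (x : EuclideanSpace ℝ (Fin N)) :
    Lop F E (fun y => (‖y‖ ^ 2) ^ (n + 1)) x =
      (n + 1) * (‖x‖ ^ 2) ^ n * Lop F E (fun y => ‖y‖ ^ 2) x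
        + 4 * (n + 1) * (n * (‖x‖ ^ 2) ^ (n - 1)) * ∑ d, ⟪x, E d x⟫ ^ 2 := by
  have hη' := (hasDerivAt_pow n (‖x‖ ^ 2)).const_mul ((n : ℝ) + 1)
  have h := Lop_comp F E (η := fun t => t ^ (n + 1))
    (fun t => by simpa using hasDerivAt_pow (n + 1) t) hη'
    (contDiff_norm_sq ℝ (n := 1)).differentiable_one (fun d => (hE d x).fderiv_norm_sq_apply)
  simp only [Function.comp_def, fderiv_norm_sq_apply_apply, mul_pow, ← Finset.mul_sum] at h
  linear_combination h

end Lop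

theorem stmt4 {N D : ℕ}
    (F : EuclideanSpace ℝ (Fin N) → EuclideanSpace ℝ (Fin N))
    (E : Fin D → EuclideanSpace ℝ (Fin N) → EuclideanSpace ℝ (Fin N))
    (hE : ∀ d, ContDiff ℝ 1 (E d))
    (M : ℝ) (hM : ∀ d x, ‖E d x‖ ≤ M)
    (ν lam : ℝ) (hν : 1 ≤ ν)
    (hL : ∀ x, Lop F E (fun y => ‖y‖ ^ 2) x ≤ ν + lam * ‖x‖ ^ 2) :
    ∀ q : ℕ, 1 ≤ q → ∃ C > (0 : ℝ), ∀ x,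
      Lop F E (fun y => ‖y‖ ^ (2 * q)) x ≤ C * (1 + ‖x‖ ^ (2 * q)) := by
  intro q hq
  obtain ⟨n, rfl⟩ := Nat.exists_eq_add_of_le' hq
  have hν₀ : 0 < ν := by linarith
  refine ⟨(n + 1) * (ν + 4 * n * D * M ^ 2 + |lam|), by positivity, fun x => ?_⟩
  simp_rw [pow_mul]
  rw [Lop_norm_sq_pow_succ F E (fun d => (hE d).differentiable one_ne_zero)]
  set t := ‖x‖ ^ 2
  have ht : 0 ≤ t := by positivity
  have htn := pow_le_one_add_pow_succ ht n
  have hlam : lam * t ^ (n + 1) ≤ |lam| * (1 + t ^ (n + 1)) := by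
    nlinarith [le_abs_self lam, abs_nonneg lam, pow_nonneg ht (n + 1)]
  calc (n + 1) * t ^ n * Lop F E (fun y => ‖y‖ ^ 2) x
        + 4 * (n + 1) * (n * t ^ (n - 1)) * ∑ d, ⟪x, E d x⟫ ^ 2
      ≤ (n + 1) * t ^ n * (ν + lam * t) + 4 * (n + 1) * (n * t ^ (n - 1)) * (D * M ^ 2 * t) := by
        gcongr
        · exact hL x
        · simpa using sum_sq_inner_le (hM · x) x
    _ = (n + 1) * ((ν + 4 * n * D * M ^ 2) * t ^ n + lam * t ^ (n + 1)) := by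
        linear_combination (n + 1) * 4 * D * M ^ 2 * natCast_mul_pow_sub_one_mul_self n t
    _ ≤ (n + 1) * ((ν + 4 * n * D * M ^ 2) * (1 + t ^ (n + 1)) + |lam| * (1 + t ^ (n + 1))) := by
        gcongr
    _ = (n + 1) * (ν + 4 * n * D * M ^ 2 + |lam|) * (1 + t ^ (n + 1)) := by ring
end

section
/- Let α, β, θ₀ ∈ ℝ with α ≠ 0 and r₀ > 0. Define r(t) = r₀ + αt and θ(t) = θ₀ + (β/α)·(log(sinh(r₀ + αt)) − log(sinh(r₀))). Then r(0) = r₀, θ(0) = θ₀, and for every t ∈ ℝ with r₀ + αt > 0, the function r has derivative α at t and the function θ has derivative β / tanh(r(t)) at t. In other words, (r, θ) solves the frozen-flow system r' = α, θ' = β/tanh(r) with initial condition (r₀, θ₀) on the set {t : r₀ + αt > 0}. -/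
theorem stmt8 (α β θ₀ r₀ : ℝ) (hα : α ≠ 0) (hr₀ : 0 < r₀)
    (r θ : ℝ → ℝ)
    (hr : ∀ t, r t = r₀ + α * t)
    (hθ : ∀ t, θ t = θ₀ + (β / α) * (Real.log (Real.sinh (r₀ + α * t)) - Real.log (Real.sinh r₀))) :
    r 0 = r₀ ∧ θ 0 = θ₀ ∧
      ∀ t : ℝ, 0 < r₀ + α * t →
        HasDerivAt r α t ∧ HasDerivAt θ (β / Real.tanh (r t)) t := by
  refine ⟨by simp [hr], by simp [hθ], fun t ht => ?_⟩
  have hsinh : 0 < Real.sinh (r₀ + α * t) := by simpa using Real.sinh_pos_iff.mpr ht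
  have hu : HasDerivAt (fun t : ℝ => r₀ + α * t) α t := by
    simpa using ((hasDerivAt_id t).const_mul α).const_add r₀
  have hR : HasDerivAt r α t := by
    apply hu.congr_of_eventuallyEq
    filter_upwards with x using (hr x)
  refine ⟨hR, ?_⟩
  have hs : HasDerivAt (fun t : ℝ => Real.sinh (r₀ + α * t))
      (Real.cosh (r₀ + α * t) * α) t := (Real.hasDerivAt_sinh _).comp t hu
  have hl : HasDerivAt (fun t : ℝ => Real.log (Real.sinh (r₀ + α * t)))
      (Real.cosh (r₀ + α * t) * α / Real.sinh (r₀ + α * t)) t :=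
    hs.log hsinh.ne'
  have hθ' : HasDerivAt θ
      ((β / α) * (Real.cosh (r₀ + α * t) * α / Real.sinh (r₀ + α * t))) t := by
    apply HasDerivAt.congr_of_eventuallyEq
      (((hl.sub_const (Real.log (Real.sinh r₀))).const_mul (β / α)).const_add θ₀)
    filter_upwards with x using (hθ x)
  convert hθ' using 1
  rw [hr, Real.tanh_eq_sinh_div_cosh]
  have hcosh : Real.cosh (r₀ + α * t) ≠ 0 := (Real.cosh_pos _).ne'
  field_simp
end

section
/- Every nonempty exotic planar forest π admits a unique factorization as a concatenation π = π₁ · π₂ ⋯ π_k of irreducible exotic planar forests: such a decomposition exists, and the sequence (π₁, …, π_k) is uniquely determined by π. (Consequently the concatenation algebra of exotic planar forests is the tensor algebra over the span of irreducible exotic forests.) -/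
/-! Exotic planar forests (here represented by concrete decorated planar forests
over `{•} ∪ ℕ`, validity of the liana pairing being part of the definition): every
nonempty exotic planar forest factors uniquely as a concatenation of irreducible
exotic planar forests. -/

inductive Dec : Type where
  | bullet : Dec
  | num : ℕ → Dec
  deriving DecidableEq

/-- Decorated planar trees: a decoration together with an ordered list of subtrees. -/
inductive PTree : Type where
  | node : Dec → List PTree → PTree

/-- Decorated planar forests: ordered lists of decorated planar trees. -/
abbrev Forest : Type := List PTree

namespace PTree

/-- The list of decorations of a tree, in preorder. -/
def decsT : PTree → List Dec
  | .node d ts => d :: (ts.attach.map fun t => decsT t.1).flatten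
decreasing_by
  have := List.sizeOf_lt_of_mem t.2
  simp only [PTree.node.sizeOf_spec]
  omega

/-- Every numbered node of the tree is a leaf. -/
def numLeavesT : PTree → Bool
  | .node (.num _) ts => ts.isEmpty
  | .node .bullet ts => ts.attach.all fun t => numLeavesT t.1
decreasing_by
  have := List.sizeOf_lt_of_mem t.2
  simp only [PTree.node.sizeOf_spec]
  omega

end PTree

/-- The list of decorations of a forest, in preorder. -/
def decsF (π : Forest) : List Dec := (π.map PTree.decsT).flatten

/-- The list of numbers decorating the nodes of a forest. -/
def numsF (π : Forest) : List ℕ :=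
  (decsF π).filterMap fun d => match d with | .num n => some n | .bullet => none

/-- Every numbered node of the forest is a leaf. -/
def allNumLeaves (π : Forest) : Bool := π.all PTree.numLeavesT

/-- A forest is exotic if every numbered node is a leaf and every number decorates
either zero or exactly two leaves. -/
def IsExotic (π : Forest) : Prop :=
  allNumLeaves π = true ∧ ∀ n : ℕ, (numsF π).count n = 0 ∨ (numsF π).count n = 2

/-- An exotic planar forest is irreducible if it is nonempty and is not the
concatenation of two nonempty exotic planar forests. -/
def IrreducibleEF (π : Forest) : Prop :=
  IsExotic π ∧ π ≠ [] ∧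
    ¬ ∃ π₁ π₂ : Forest, π₁ ≠ [] ∧ π₂ ≠ [] ∧ IsExotic π₁ ∧ IsExotic π₂ ∧ π = π₁ ++ π₂

lemma decsF_append (a b : Forest) : decsF (a ++ b) = decsF a ++ decsF b := by
  simp [decsF]

lemma numsF_append (a b : Forest) : numsF (a ++ b) = numsF a ++ numsF b := by
  simp [numsF, decsF_append]

lemma isExotic_of_append_right {a b : Forest} (h : IsExotic (a ++ b)) (ha : IsExotic a) :
    IsExotic b := by
  obtain ⟨h1, h2⟩ := h
  obtain ⟨ha1, ha2⟩ := ha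
  constructor
  · simp only [allNumLeaves, List.all_append, Bool.and_eq_true] at h1
    exact h1.2
  · intro n
    have hc : (numsF (a ++ b)).count n = (numsF a).count n + (numsF b).count n := by
      rw [numsF_append, List.count_append]
    have := h2 n
    have := ha2 n
    omega

/-- Existence of a factorization. -/
lemma exists_fact (π : Forest) (hex : IsExotic π) (hne : π ≠ []) :
    ∃ l : List Forest, (∀ ρ ∈ l, IrreducibleEF ρ) ∧ π = l.flatten := by
    by_cases hirr : IrreducibleEF π
    · exact ⟨[π], by simpa using hirr, by simp⟩
    · have : ∃ π₁ π₂ : Forest, π₁ ≠ [] ∧ π₂ ≠ [] ∧ IsExotic π₁ ∧ IsExotic π₂ ∧ π = π₁ ++ π₂ := by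
        by_contra hcon
        exact hirr ⟨hex, hne, hcon⟩
      obtain ⟨π₁, π₂, h1, h2, he1, he2, heq⟩ := this
      have hl1 : π₁.length < π.length := by
        rw [heq, List.length_append]
        have := List.length_pos_iff.mpr h2
        omega
      have hl2 : π₂.length < π.length := by
        rw [heq, List.length_append]
        have := List.length_pos_iff.mpr h1
        omega
      obtain ⟨l₁, hl₁, hf₁⟩ := exists_fact π₁ he1 h1
      obtain ⟨l₂, hl₂, hf₂⟩ := exists_fact π₂ he2 h2
      refine ⟨l₁ ++ l₂, ?_, ?_⟩
      · intro ρ hρ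
        rcases List.mem_append.mp hρ with h | h
        · exact hl₁ ρ h
        · exact hl₂ ρ h
      · rw [heq, hf₁, hf₂, List.flatten_append]
termination_by π.length
decreasing_by
  · exact hl1
  · exact hl2

/-- If two irreducibles start the same forest, the shorter one equals the longer. -/
lemma head_eq {ρ ρ' : Forest} {x y : Forest} (hρ : IrreducibleEF ρ) (hρ' : IrreducibleEF ρ')
    (heq : ρ ++ x = ρ' ++ y) (hlen : ρ.length ≤ ρ'.length) : ρ = ρ' := by
  have hpre : ρ <+: ρ' := by
    have h1 : ρ <+: ρ' ++ y := ⟨x, heq⟩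
    exact List.prefix_of_prefix_length_le h1 (List.prefix_append ρ' y) hlen
  obtain ⟨b, hb⟩ := hpre
  by_cases hbe : b = []
  · simp [hbe] at hb; exact hb
  · exfalso
    have hbex : IsExotic b := by
      rw [← hb] at hρ'
      exact isExotic_of_append_right hρ'.1 hρ.1
    exact hρ'.2.2 ⟨ρ, b, hρ.2.1, hbe, hρ.1, hbex, hb.symm⟩

/-- Uniqueness of factorizations into irreducibles. -/
lemma uniq_fact : ∀ l₁ l₂ : List Forest, (∀ ρ ∈ l₁, IrreducibleEF ρ) →
    (∀ ρ ∈ l₂, IrreducibleEF ρ) → l₁.flatten = l₂.flatten → l₁ = l₂ := by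
  intro l₁
  induction l₁ with
  | nil =>
    intro l₂ _ h2 hf
    cases l₂ with
    | nil => rfl
    | cons ρ t =>
      exfalso
      have : ρ ++ t.flatten = ([] : Forest) := by simpa using hf.symm
      exact (h2 ρ (by simp)).2.1 (List.append_eq_nil_iff.mp this).1
  | cons ρ t ih =>
    intro l₂ h1 h2 hf
    cases l₂ with
    | nil =>
      exfalso
      have : ρ ++ t.flatten = ([] : Forest) := by simpa using hf
      exact (h1 ρ (by simp)).2.1 (List.append_eq_nil_iff.mp this).1
    | cons ρ' t' =>
      simp only [List.flatten_cons] at hf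
      have hρ : IrreducibleEF ρ := h1 ρ (by simp)
      have hρ' : IrreducibleEF ρ' := h2 ρ' (by simp)
      have hee : ρ = ρ' := by
        rcases le_total ρ.length ρ'.length with h | h
        · exact head_eq hρ hρ' hf h
        · exact (head_eq hρ' hρ hf.symm h).symm
      subst hee
      have htt : t.flatten = t'.flatten := by
        exact List.append_cancel_left hf
      have := ih t' (fun σ hσ => h1 σ (by simp [hσ])) (fun σ hσ => h2 σ (by simp [hσ])) htt
      rw [this]

/-- Every nonempty exotic planar forest admits a unique factorization as a
concatenation of irreducible exotic planar forests. -/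
theorem stmt15 (π : Forest) (hexotic : IsExotic π) (hne : π ≠ []) :
    ∃! l : List Forest, (∀ ρ ∈ l, IrreducibleEF ρ) ∧ π = l.flatten := by
  obtain ⟨l, hl, hf⟩ := exists_fact π hexotic hne
  refine ⟨l, ⟨hl, hf⟩, ?_⟩
  intro l' ⟨hl', hf'⟩
  exact uniq_fact l' l hl' hl (by rw [← hf', ← hf])
end
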